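/- Let 𝒦 = {K₁, …, K_M} be a finite set of row-stochastic N×N real matrices, each with strictly positive diagonal entries, let p₁, …, p_M be strictly positive reals summing to 1, and suppose Σᵢ pᵢKᵢ is primitive. Define E[Ψ₂(t)] = Σ_{(k₁,…,k_t) ∈ {1,…,M}^t} p_{k₁}⋯p_{k_t} · ‖(I−J)K_{k₁}⋯K_{k_t}‖_F² and R = ((I−J) ⊗ (I−J)) · Σᵢ pᵢ (Kᵢ ⊗ Kᵢ). Then ρ(R) < 1 (equivalently, κ := −log ρ(R) > 0), and for every η with ρ(R) < η < 1 there exists a constant C > 0 such that E[Ψ₂(t)] ≤ C·η^t for all t ≥ 1; in particular E[Ψ₂(t)] → 0 exponentially fast. -/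

import Mathlib

open Matrix Kronecker Finset

/-- A square real matrix is row-stochastic if it has nonnegative entries and
each of its rows sums to 1. -/
def RowStochastic {N : ℕ} (K : Matrix (Fin N) (Fin N) ℝ) : Prop :=
  (∀ i j, 0 ≤ K i j) ∧ ∀ i, ∑ j, K i j = 1

/-- A nonnegative square matrix `T` is primitive if `T ^ m` has all entries
strictly positive for some integer `m ≥ 1`. -/
def IsPrimitive {n : Type*} [Fintype n] [DecidableEq n] (T : Matrix n n ℝ) : Prop :=
  ∃ m : ℕ, 1 ≤ m ∧ ∀ i j, 0 < (T ^ m) i j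

/-- `J = (1/N) 𝟙 𝟙ᵀ`, the `N × N` averaging matrix. -/
noncomputable def Jmat (N : ℕ) : Matrix (Fin N) (Fin N) ℝ :=
  Matrix.of fun _ _ => (N : ℝ)⁻¹

/-- The spectral radius of a real square matrix: the maximum modulus of its
complex eigenvalues. -/
noncomputable def specRad {n : Type*} [Fintype n] [DecidableEq n]
    (A : Matrix n n ℝ) : ℝ :=
  (spectralRadius ℂ (A.map Complex.ofReal)).toReal

/-!
Write `P = I - J` and `S = ∑ₖ pₖ (Kₖ ⊗ Kₖ)`. Averaging over words, `E[Ψ₂(t)]` is the sum of the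
entries of `(P ⊗ P) Sᵗ` at the positions `((i, i), (j, j))`; and since every `Kₖ` fixes the
constant vectors, `P Kₖ P = P Kₖ`, whence `Rᵗ = (P ⊗ P) Sᵗ` for `t ≥ 1`. The matrix `S` is
row-stochastic, and because the `Kₖ` have positive diagonals, primitivity of `∑ₖ pₖ Kₖ` makes
`S^(2m)` strictly positive. Dobrushin's contraction of zero-sum rows by a positive stochastic
matrix then gives `Rᵗ → 0`, so `ρ(R) < 1`, and Gelfand's formula bounds the entries of `Rᵗ`
by `C ηᵗ` for every `η > ρ(R)`.
-/

open scoped Topology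
open Filter

section Words

variable {ι A : Type*}

def wordProd [Monoid A] {t : ℕ} (a : ι → A) (f : Fin t → ι) : A :=
  (List.ofFn fun s => a (f s)).prod

def wordWeight [CommMonoid A] {t : ℕ} (c : ι → A) (f : Fin t → ι) : A :=
  ∏ s, c (f s)

@[simp]
lemma wordProd_zero [Monoid A] (a : ι → A) (f : Fin 0 → ι) : wordProd a f = 1 := rfl

lemma wordProd_cons [Monoid A] {t : ℕ} (a : ι → A) (k : ι) (f : Fin t → ι) :
    wordProd a (Fin.cons k f : Fin (t + 1) → ι) = a k * wordProd a f := by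
  simp [wordProd, List.ofFn_succ]

lemma wordWeight_cons [CommMonoid A] {t : ℕ} (c : ι → A) (k : ι) (f : Fin t → ι) :
    wordWeight c (Fin.cons k f : Fin (t + 1) → ι) = c k * wordWeight c f := by
  simp [wordWeight, Fin.prod_univ_succ]

lemma wordWeight_pos {R : Type*} [CommSemiring R] [PartialOrder R] [IsStrictOrderedRing R]
    {t : ℕ} {c : ι → R} (hc : ∀ k, 0 < c k) (f : Fin t → ι) : 0 < wordWeight c f :=
  Finset.prod_pos fun s _ => hc (f s)

lemma sum_smul_pow [Fintype ι] {R : Type*} [CommSemiring R] [Semiring A] [Algebra R A]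
    (c : ι → R) (a : ι → A) (t : ℕ) :
    (∑ k, c k • a k) ^ t = ∑ f : Fin t → ι, wordWeight c f • wordProd a f := by
  induction t with
  | zero => simp [wordWeight]
  | succ t ih =>
    rw [pow_succ', ih, Finset.sum_mul_sum, ← (Fin.consEquiv fun _ => ι).sum_comp,
      Fintype.sum_prod_type]
    refine Finset.sum_congr rfl fun k _ => Finset.sum_congr rfl fun f _ => ?_
    show _ = wordWeight c (Fin.cons k f : Fin (t + 1) → ι) • wordProd a (Fin.cons k f)
    rw [wordProd_cons, wordWeight_cons, smul_mul_smul_comm]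

end Words

lemma mul_pow_succ_of_mul_mul_eq {M : Type*} [Monoid M] {e s : M} (h : e * s * e = e * s)
    (t : ℕ) : (e * s) ^ (t + 1) = e * s ^ (t + 1) := by
  induction t with
  | zero => simp
  | succ t ih => rw [pow_succ', ih, ← mul_assoc, h, mul_assoc, ← pow_succ']

namespace Matrix

section Kronecker

variable {R ι m n : Type*} [CommSemiring R] [Fintype m] [Fintype n]

lemma kronecker_mulVec_one (A : Matrix m m R) (B : Matrix n n R) :
    (A ⊗ₖ B) *ᵥ 1 = fun x => (A *ᵥ 1) x.1 * (B *ᵥ 1) x.2 := by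
  ext x
  simp [mulVec, dotProduct, Fintype.sum_prod_type, Finset.sum_mul_sum]

variable [DecidableEq m] [DecidableEq n]

lemma wordProd_kronecker {t : ℕ} (a : ι → Matrix m m R) (b : ι → Matrix n n R)
    (f : Fin t → ι) :
    wordProd (fun k => a k ⊗ₖ b k) f = wordProd a f ⊗ₖ wordProd b f := by
  induction t with
  | zero => simp
  | succ t ih =>
    rw [← Fin.cons_self_tail f, wordProd_cons, wordProd_cons, wordProd_cons, ih,
      mul_kronecker_mul]

lemma sum_smul_kronecker_self_pow [Fintype ι] (c : ι → R) (a : ι → Matrix n n R) (t : ℕ) :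
    (∑ k, c k • (a k ⊗ₖ a k)) ^ t =
      ∑ f : Fin t → ι, wordWeight c f • (wordProd a f ⊗ₖ wordProd a f) := by
  simp only [sum_smul_pow, wordProd_kronecker]

lemma sum_wordWeight_mul_sum_sq_eq_kronecker_pow [Fintype ι] (P : Matrix n n R) (c : ι → R)
    (a : ι → Matrix n n R) (t : ℕ) :
    ∑ f : Fin t → ι, wordWeight c f * ∑ i, ∑ j, ((P * wordProd a f) i j) ^ 2 =
      ∑ i, ∑ j, ((P ⊗ₖ P) * (∑ k, c k • (a k ⊗ₖ a k)) ^ t) (i, i) (j, j) := by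
  simp only [sum_smul_kronecker_self_pow, Finset.mul_sum, mul_smul_comm, ← mul_kronecker_mul,
    sum_apply, smul_apply, kronecker_apply, smul_eq_mul, sq]
  rw [Finset.sum_comm]
  exact Finset.sum_congr rfl fun i _ => Finset.sum_comm

end Kronecker

section Nonneg

lemma le_mul_apply {l m n : Type*} [Fintype m] {A : Matrix l m ℝ} {B : Matrix m n ℝ}
    (hA : ∀ i j, 0 ≤ A i j) (hB : ∀ i j, 0 ≤ B i j) (i : l) (j : m) (k : n) :
    A i j * B j k ≤ (A * B) i k :=
  Finset.single_le_sum (f := fun j => A i j * B j k)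
    (fun j _ => mul_nonneg (hA i j) (hB j k)) (Finset.mem_univ j)

lemma mul_self_sum_smul_kronecker_self_pos {n ι : Type*} [Fintype n] [Fintype ι] {w : ι → ℝ}
    {W : ι → Matrix n n ℝ} (hw : ∀ f, 0 ≤ w f) (hW : ∀ f i j, 0 ≤ W f i j)
    (hdiag : ∀ f i, 0 < W f i i) (hpos : ∀ i j, 0 < (∑ f, w f • W f) i j) (x y : n × n) :
    0 < ((∑ f, w f • (W f ⊗ₖ W f)) * ∑ f, w f • (W f ⊗ₖ W f)) x y := by
  set T := ∑ f, w f • (W f ⊗ₖ W f)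
  have hT : ∀ a b c d, T (a, c) (b, d) = ∑ f, w f * (W f a b * W f c d) := by
    intro a b c d
    simp [T, Matrix.sum_apply]
  have hterm_nonneg : ∀ f a b c d, 0 ≤ w f * (W f a b * W f c d) := fun f _ _ _ _ =>
    mul_nonneg (hw f) (mul_nonneg (hW f _ _) (hW f _ _))
  have hT_nonneg : ∀ x y, 0 ≤ T x y := fun _ _ => by
    rw [hT]
    exact Finset.sum_nonneg fun f _ => hterm_nonneg f _ _ _ _
  have hterm : ∀ f a b c d, w f * (W f a b * W f c d) ≤ T (a, c) (b, d) := fun f a b c d => by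
    rw [hT]
    exact Finset.single_le_sum (f := fun g => w g * (W g a b * W g c d))
      (fun g _ => hterm_nonneg g _ _ _ _) (Finset.mem_univ f)
  -- a word joining `a` to `b` also keeps every state in place with positive weight, so `T`
  -- can move either coordinate of a pair while the other one stays put
  have hstep : ∀ a b c, 0 < T (a, c) (b, c) ∧ 0 < T (c, a) (c, b) := by
    intro a b c
    obtain ⟨f, -, hf⟩ : ∃ f ∈ Finset.univ, 0 < w f * W f a b :=
      Finset.exists_lt_of_sum_lt (by simpa [Matrix.sum_apply] using hpos a b)
    have hfc : 0 < w f * (W f a b * W f c c) := by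
      rw [← mul_assoc]
      exact mul_pos hf (hdiag f c)
    refine ⟨hfc.trans_le (hterm f a b c c), ?_⟩
    rw [mul_comm (W f a b)] at hfc
    exact hfc.trans_le (hterm f c c a b)
  obtain ⟨a, c⟩ := x
  obtain ⟨b, d⟩ := y
  exact (mul_pos (hstep a b c).1 (hstep c d b).2).trans_le
    (le_mul_apply hT_nonneg hT_nonneg _ (b, c) _)

end Nonneg

section Stochastic

variable {n : Type*} [Fintype n] [DecidableEq n]

lemma kronecker_mem_rowStochastic {m : Type*} [Fintype m] [DecidableEq m]
    {A : Matrix m m ℝ} {B : Matrix n n ℝ}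
    (hA : A ∈ rowStochastic ℝ m) (hB : B ∈ rowStochastic ℝ n) :
    A ⊗ₖ B ∈ rowStochastic ℝ (m × n) := by
  refine ⟨fun x y => mul_nonneg (hA.1 _ _) (hB.1 _ _), ?_⟩
  rw [kronecker_mulVec_one, hA.2, hB.2]
  ext x
  simp

lemma mul_mulVec_one_eq_zero {m : Type*} {W : Matrix m n ℝ} (hW : W *ᵥ 1 = 0)
    {T : Matrix n n ℝ} (hT : T ∈ rowStochastic ℝ n) : (W * T) *ᵥ 1 = 0 := by
  rw [← mulVec_mulVec, hT.2, hW]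

lemma list_prod_apply_self_pos {L : List (Matrix n n ℝ)}
    (hL : ∀ A ∈ L, A ∈ rowStochastic ℝ n ∧ ∀ i, 0 < A i i) (i : n) : 0 < L.prod i i := by
  induction L with
  | nil => simp
  | cons A L ih =>
    simp only [List.forall_mem_cons] at hL
    have hLprod : L.prod ∈ rowStochastic ℝ n := list_prod_mem fun B hB => (hL.2 B hB).1
    rw [List.prod_cons]
    exact (mul_pos (hL.1.2 i) (ih hL.2)).trans_le (le_mul_apply hL.1.1.1 hLprod.1 i i i)

variable {ι : Type*} {t : ℕ} {K : ι → Matrix n n ℝ}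

lemma wordProd_mem_rowStochastic (hK : ∀ k, K k ∈ rowStochastic ℝ n) (f : Fin t → ι) :
    wordProd K f ∈ rowStochastic ℝ n :=
  list_prod_mem (List.forall_mem_ofFn_iff.mpr fun s => hK (f s))

lemma wordProd_apply_self_pos (hK : ∀ k, K k ∈ rowStochastic ℝ n) (hdiag : ∀ k i, 0 < K k i i)
    (f : Fin t → ι) (i : n) : 0 < wordProd K f i i :=
  list_prod_apply_self_pos (List.forall_mem_ofFn_iff.mpr fun s => ⟨hK (f s), hdiag (f s)⟩) i

end Stochastic

end Matrix

namespace Matrix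

open scoped Matrix.Norms.Operator

lemma linfty_opNorm_le_iff {m n α : Type*} [Fintype m] [Fintype n] [SeminormedAddCommGroup α]
    {A : Matrix m n α} {c : ℝ} (hc : 0 ≤ c) : ‖A‖ ≤ c ↔ ∀ i, ∑ j, ‖A i j‖ ≤ c := by
  lift c to NNReal using hc
  rw [linfty_opNorm_def, NNReal.coe_le_coe, Finset.sup_le_iff]
  refine forall_congr' fun i => ?_
  rw [← NNReal.coe_le_coe, NNReal.coe_sum]
  simp only [Finset.mem_univ, true_implies, coe_nnnorm]

lemma norm_apply_le_linfty_opNorm {m n α : Type*} [Fintype m] [Fintype n]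
    [SeminormedAddCommGroup α] (A : Matrix m n α) (i : m) (j : n) : ‖A i j‖ ≤ ‖A‖ :=
  (Finset.single_le_sum (f := fun j => ‖A i j‖) (fun _ _ => norm_nonneg _)
    (Finset.mem_univ j)).trans ((linfty_opNorm_le_iff (norm_nonneg A)).mp le_rfl i)

lemma linfty_opNorm_map_ofReal {m n : Type*} [Fintype m] [Fintype n] (A : Matrix m n ℝ) :
    ‖A.map Complex.ofReal‖ = ‖A‖ := by
  simp [linfty_opNorm_def]

variable {n : Type*} [Fintype n] [DecidableEq n]

lemma map_ofReal_pow (A : Matrix n n ℝ) (t : ℕ) :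
    (A ^ t).map Complex.ofReal = A.map Complex.ofReal ^ t :=
  map_pow Complex.ofRealHom.mapMatrix A t

lemma sum_abs_vecMul_le {T : Matrix n n ℝ} (hT : T ∈ rowStochastic ℝ n) {ε : ℝ}
    (hε : ∀ i j, ε ≤ T i j) {y : n → ℝ} (hy : ∑ i, y i = 0) :
    ∑ j, |(y ᵥ* T) j| ≤ (1 - Fintype.card n * ε) * ∑ i, |y i| := by
  -- subtracting `ε` from every entry of `T` does not change `y ᵥ* T`, since `y` sums to zero
  have hshift : ∀ j, (y ᵥ* T) j = ∑ i, y i * (T i j - ε) := fun j => by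
    simp [vecMul, dotProduct, mul_sub, Finset.sum_sub_distrib, ← Finset.sum_mul, hy]
  calc ∑ j, |(y ᵥ* T) j| ≤ ∑ j, ∑ i, |y i| * (T i j - ε) := by
        refine Finset.sum_le_sum fun j _ => ?_
        rw [hshift]
        refine (Finset.abs_sum_le_sum_abs _ _).trans_eq (Finset.sum_congr rfl fun i _ => ?_)
        rw [abs_mul, abs_of_nonneg (sub_nonneg.mpr (hε i j))]
    _ = ∑ i, |y i| * (1 - Fintype.card n * ε) := by
        rw [Finset.sum_comm]
        refine Finset.sum_congr rfl fun i _ => ?_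
        rw [← Finset.mul_sum, Finset.sum_sub_distrib, sum_row_of_mem_rowStochastic hT,
          Finset.sum_const, Finset.card_univ, nsmul_eq_mul]
    _ = (1 - Fintype.card n * ε) * ∑ i, |y i| := by rw [← Finset.sum_mul, mul_comm]

lemma norm_mul_le_of_mulVec_one_eq_zero {m : Type*} [Fintype m] {W : Matrix m n ℝ}
    (hW : W *ᵥ 1 = 0) {T : Matrix n n ℝ} (hT : T ∈ rowStochastic ℝ n) {ε : ℝ}
    (hε : ∀ i j, ε ≤ T i j) (hθ : 0 ≤ 1 - Fintype.card n * ε) :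
    ‖W * T‖ ≤ (1 - Fintype.card n * ε) * ‖W‖ := by
  refine (linfty_opNorm_le_iff (mul_nonneg hθ (norm_nonneg W))).mpr fun a => ?_
  have hrow : ∑ i, W a i = 0 := by simpa [mulVec, dotProduct] using congrFun hW a
  calc ∑ j, ‖(W * T) a j‖ = ∑ j, |(W a ᵥ* T) j| := rfl
    _ ≤ (1 - Fintype.card n * ε) * ∑ i, |W a i| := sum_abs_vecMul_le hT hε hrow
    _ ≤ (1 - Fintype.card n * ε) * ‖W‖ :=
        mul_le_mul_of_nonneg_left ((linfty_opNorm_le_iff (norm_nonneg W)).mp le_rfl a) hθ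

lemma norm_mul_le_of_mem_rowStochastic {m : Type*} [Fintype m] {W : Matrix m n ℝ}
    (hW : W *ᵥ 1 = 0) {T : Matrix n n ℝ} (hT : T ∈ rowStochastic ℝ n) : ‖W * T‖ ≤ ‖W‖ := by
  simpa using norm_mul_le_of_mulVec_one_eq_zero hW hT (ε := 0) (fun i j => hT.1 i j) (by simp)

variable [Nonempty n] {m : Type*} [Fintype m] {W : Matrix m n ℝ} {T : Matrix n n ℝ}

lemma tendsto_mul_pow_nhds_zero_of_pos (hW : W *ᵥ 1 = 0) (hT : T ∈ rowStochastic ℝ n)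
    (hpos : ∀ i j, 0 < T i j) : Tendsto (fun q => W * T ^ q) atTop (𝓝 0) := by
  obtain ⟨⟨i₀, j₀⟩, -, hmin⟩ := Finset.exists_min_image Finset.univ
    (fun x : n × n => T x.1 x.2) Finset.univ_nonempty
  set θ := 1 - Fintype.card n * T i₀ j₀
  have hε : ∀ i j, T i₀ j₀ ≤ T i j := fun i j => hmin (i, j) (Finset.mem_univ _)
  have hθ : 0 ≤ θ := by
    obtain ⟨i⟩ := ‹Nonempty n›
    have := Finset.card_nsmul_le_sum Finset.univ (T i) (T i₀ j₀) fun j _ => hε i j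
    rw [sum_row_of_mem_rowStochastic hT, Finset.card_univ, nsmul_eq_mul] at this
    linarith
  have hθ_lt : θ < 1 := by
    have := mul_pos (Nat.cast_pos.mpr (Fintype.card_pos (α := n))) (hpos i₀ j₀)
    linarith
  have hbound : ∀ q, ‖W * T ^ q‖ ≤ θ ^ q * ‖W‖ := by
    intro q
    induction q with
    | zero => simp
    | succ q ih =>
      calc ‖W * T ^ (q + 1)‖ = ‖(W * T ^ q) * T‖ := by rw [pow_succ, Matrix.mul_assoc]
        _ ≤ θ * ‖W * T ^ q‖ :=
            norm_mul_le_of_mulVec_one_eq_zero (mul_mulVec_one_eq_zero hW (pow_mem hT q)) hT hε hθ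
        _ ≤ θ * (θ ^ q * ‖W‖) := mul_le_mul_of_nonneg_left ih hθ
        _ = θ ^ (q + 1) * ‖W‖ := by ring
  exact squeeze_zero_norm hbound
    (by simpa using (tendsto_pow_atTop_nhds_zero_of_lt_one hθ hθ_lt).mul_const ‖W‖)

lemma tendsto_mul_pow_nhds_zero (hW : W *ᵥ 1 = 0) (hT : T ∈ rowStochastic ℝ n) {L : ℕ}
    (hL : L ≠ 0) (hpos : ∀ i j, 0 < (T ^ L) i j) : Tendsto (fun t => W * T ^ t) atTop (𝓝 0) := by
  have hsub : Tendsto (fun t => W * (T ^ L) ^ (t / L)) atTop (𝓝 0) :=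
    (tendsto_mul_pow_nhds_zero_of_pos hW (pow_mem hT L) hpos).comp (Nat.tendsto_div_const_atTop hL)
  refine squeeze_zero_norm (fun t => ?_) (by simpa using hsub.norm)
  calc ‖W * T ^ t‖ = ‖W * (T ^ L) ^ (t / L) * T ^ (t % L)‖ := by
        rw [Matrix.mul_assoc, ← pow_mul, ← pow_add, Nat.div_add_mod]
    _ ≤ ‖W * (T ^ L) ^ (t / L)‖ :=
        norm_mul_le_of_mem_rowStochastic (mul_mulVec_one_eq_zero hW (pow_mem (pow_mem hT L) _))
          (pow_mem hT _)

end Matrix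

section SpectralRadius

open Asymptotics
open scoped Matrix.Norms.Operator

variable {n : Type*} [Fintype n] [DecidableEq n] [Nonempty n]

lemma Matrix.spectralRadius_ne_top (a : Matrix n n ℂ) : spectralRadius ℂ a ≠ ⊤ :=
  ne_top_of_le_ne_top ENNReal.coe_ne_top (spectrum.spectralRadius_le_nnnorm a)

lemma specRad_pow_le_norm_pow (A : Matrix n n ℝ) (k : ℕ) : specRad A ^ k ≤ ‖A ^ k‖ := by
  set a := A.map Complex.ofReal
  calc specRad A ^ k = (spectralRadius ℂ a ^ k).toReal := (ENNReal.toReal_pow _ _).symm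
    _ ≤ (spectralRadius ℂ (a ^ k)).toReal :=
        ENNReal.toReal_mono (Matrix.spectralRadius_ne_top _) (spectrum.spectralRadius_pow_le' a k)
    _ ≤ ‖a ^ k‖ := by
        simpa using ENNReal.toReal_mono ENNReal.coe_ne_top (spectrum.spectralRadius_le_nnnorm _)
    _ = ‖A ^ k‖ := by rw [← Matrix.map_ofReal_pow, Matrix.linfty_opNorm_map_ofReal]

lemma specRad_lt_one_of_tendsto_pow {A : Matrix n n ℝ}
    (h : Tendsto (fun t => A ^ t) atTop (𝓝 0)) : specRad A < 1 := by
  obtain ⟨k, hk, hk0⟩ := ((h.norm.eventually (gt_mem_nhds (by simp : ‖(0 : Matrix n n ℝ)‖ < 1))).and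
    (eventually_ne_atTop 0)).exists
  exact (pow_lt_one_iff_of_nonneg ENNReal.toReal_nonneg hk0).mp
    ((specRad_pow_le_norm_pow A k).trans_lt hk)

lemma exists_abs_pow_apply_le_of_specRad_lt {A : Matrix n n ℝ} {η : ℝ} (h : specRad A < η) :
    ∃ C > 0, ∀ t i j, |(A ^ t) i j| ≤ C * η ^ t := by
  set a := A.map Complex.ofReal
  have hη : 0 < η := ENNReal.toReal_nonneg.trans_lt h
  have hlt : spectralRadius ℂ a < ENNReal.ofReal η :=
    (ENNReal.lt_ofReal_iff_toReal_lt (Matrix.spectralRadius_ne_top a)).mpr h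
  have hev : ∀ᶠ t in atTop, ‖A ^ t‖ ≤ η ^ t := by
    filter_upwards [(spectrum.pow_norm_pow_one_div_tendsto_nhds_spectralRadius a).eventually
      (gt_mem_nhds hlt), eventually_ne_atTop 0] with t ht ht0
    rw [ENNReal.ofReal_lt_ofReal_iff hη, one_div] at ht
    rw [← Matrix.linfty_opNorm_map_ofReal, Matrix.map_ofReal_pow,
      ← Real.rpow_inv_natCast_pow (norm_nonneg (a ^ t)) ht0]
    exact pow_le_pow_left₀ (by positivity) ht.le t
  have hO : (fun t => ‖A ^ t‖) =O[atTop] fun t => η ^ t :=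
    IsBigO.of_bound 1 (hev.mono fun t ht => by simpa [abs_of_pos hη] using ht)
  obtain ⟨C, hC, hCb⟩ := bound_of_isBigO_nat_atTop hO
  refine ⟨C, hC, fun t i j => ?_⟩
  rw [← Real.norm_eq_abs]
  refine (Matrix.norm_apply_le_linfty_opNorm _ i j).trans ?_
  simpa [abs_of_pos hη] using hCb (pow_ne_zero t hη.ne')

end SpectralRadius

section Averaging

variable {N : ℕ}

lemma Jmat_mem_rowStochastic (hN : N ≠ 0) : Jmat N ∈ rowStochastic ℝ (Fin N) :=
  mem_rowStochastic_iff_sum.mpr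
    ⟨fun _ _ => by simp [Jmat], fun _ => by simp [Jmat, hN]⟩

lemma mul_Jmat {K : Matrix (Fin N) (Fin N) ℝ} (hK : K ∈ rowStochastic ℝ (Fin N)) :
    K * Jmat N = Jmat N := by
  ext i j
  simp [mul_apply, Jmat, ← Finset.sum_mul, sum_row_of_mem_rowStochastic hK]

lemma one_sub_Jmat_mulVec_one (hN : N ≠ 0) : (1 - Jmat N) *ᵥ 1 = 0 := by
  rw [sub_mulVec, one_mulVec, (Jmat_mem_rowStochastic hN).2, sub_self]

lemma one_sub_Jmat_mul_mul_one_sub_Jmat (hN : N ≠ 0) {K : Matrix (Fin N) (Fin N) ℝ}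
    (hK : K ∈ rowStochastic ℝ (Fin N)) :
    (1 - Jmat N) * K * (1 - Jmat N) = (1 - Jmat N) * K := by
  rw [mul_sub, mul_one, mul_assoc, mul_Jmat hK, sub_eq_self, sub_mul, one_mul,
    mul_Jmat (Jmat_mem_rowStochastic hN), sub_self]

end Averaging

theorem stmt11_general {N M : ℕ} (hN : 1 ≤ N)
    (K : Fin M → Matrix (Fin N) (Fin N) ℝ)
    (hK : ∀ k, RowStochastic (K k))
    (hdiag : ∀ k i, 0 < K k i i)
    (p : Fin M → ℝ) (hp : ∀ k, 0 < p k) (hpsum : ∑ k, p k = 1)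
    (hprim : _root_.IsPrimitive (∑ k, p k • K k))
    (R : Matrix (Fin N × Fin N) (Fin N × Fin N) ℝ)
    (hR : R = ((1 - Jmat N) ⊗ₖ (1 - Jmat N)) * ∑ k, p k • (K k ⊗ₖ K k))
    (EΨ₂ : ℕ → ℝ)
    (hEΨ₂ : ∀ t, EΨ₂ t = ∑ f : Fin t → Fin M, (∏ s, p (f s)) *
        ∑ i, ∑ j, (((1 - Jmat N) * (List.ofFn fun s => K (f s)).prod) i j) ^ 2) :
    specRad R < 1 ∧
      ∀ η : ℝ, specRad R < η → η < 1 →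
        ∃ C : ℝ, 0 < C ∧ ∀ t : ℕ, 1 ≤ t → EΨ₂ t ≤ C * η ^ t := by
  obtain ⟨m, hm, hQ⟩ := hprim
  have : Nonempty (Fin N) := ⟨⟨0, hN⟩⟩
  have hN0 : N ≠ 0 := by omega
  have hKs : ∀ k, K k ∈ rowStochastic ℝ (Fin N) := fun k => mem_rowStochastic_iff_sum.mpr (hK k)
  set S := ∑ k, p k • (K k ⊗ₖ K k)
  have hS : S ∈ rowStochastic ℝ (Fin N × Fin N) := (convex_rowStochastic).sum_mem
    (fun k _ => (hp k).le) hpsum fun k _ => kronecker_mem_rowStochastic (hKs k) (hKs k)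
  have hPP : ((1 - Jmat N) ⊗ₖ (1 - Jmat N)) *ᵥ 1 = 0 := by
    rw [kronecker_mulVec_one, one_sub_Jmat_mulVec_one hN0]
    ext x
    simp
  have hRpow : ∀ t, R ^ (t + 1) = ((1 - Jmat N) ⊗ₖ (1 - Jmat N)) * S ^ (t + 1) := by
    rw [hR]
    refine mul_pow_succ_of_mul_mul_eq ?_
    simp only [S, Finset.mul_sum, Finset.sum_mul, mul_smul_comm, smul_mul_assoc,
      ← mul_kronecker_mul, one_sub_Jmat_mul_mul_one_sub_Jmat hN0 (hKs _)]
  have hSpos : ∀ x y, 0 < (S ^ (m + m)) x y := by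
    rw [pow_add, sum_smul_kronecker_self_pow]
    refine mul_self_sum_smul_kronecker_self_pos (fun f => (wordWeight_pos hp f).le)
      (fun f => (wordProd_mem_rowStochastic hKs f).1) (wordProd_apply_self_pos hKs hdiag) ?_
    rwa [← sum_smul_pow]
  have hρ : specRad R < 1 := by
    refine specRad_lt_one_of_tendsto_pow ((tendsto_add_atTop_iff_nat 1).mp ?_)
    simp only [hRpow]
    exact (tendsto_mul_pow_nhds_zero hPP hS (by omega) hSpos).comp (tendsto_add_atTop_nat 1)
  refine ⟨hρ, fun η hη _ => ?_⟩
  obtain ⟨C, hC, hCR⟩ := exists_abs_pow_apply_le_of_specRad_lt hη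
  refine ⟨N ^ 2 * C, by positivity, fun t ht => ?_⟩
  obtain ⟨t, rfl⟩ := Nat.exists_eq_add_of_le' ht
  calc EΨ₂ (t + 1) = ∑ i : Fin N, ∑ j : Fin N, (R ^ (t + 1)) (i, i) (j, j) := by
        rw [hEΨ₂, hRpow, ← sum_wordWeight_mul_sum_sq_eq_kronecker_pow]
        rfl
    _ ≤ ∑ i : Fin N, ∑ j : Fin N, C * η ^ (t + 1) :=
        Finset.sum_le_sum fun i _ => Finset.sum_le_sum fun j _ => (le_abs_self _).trans (hCR _ _ _)
    _ = N ^ 2 * C * η ^ (t + 1) := by simp [sq, mul_assoc]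

theorem stmt11 {N M : ℕ} (hN : 1 ≤ N) (hM : 1 ≤ M)
    (K : Fin M → Matrix (Fin N) (Fin N) ℝ)
    (hK : ∀ k, RowStochastic (K k))
    (hdiag : ∀ k i, 0 < K k i i)
    (p : Fin M → ℝ) (hp : ∀ k, 0 < p k) (hpsum : ∑ k, p k = 1)
    (hprim : _root_.IsPrimitive (∑ k, p k • K k))
    (R : Matrix (Fin N × Fin N) (Fin N × Fin N) ℝ)
    (hR : R = ((1 - Jmat N) ⊗ₖ (1 - Jmat N)) * ∑ k, p k • (K k ⊗ₖ K k))
    (EΨ₂ : ℕ → ℝ)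
    (hEΨ₂ : ∀ t, EΨ₂ t = ∑ f : Fin t → Fin M, (∏ s, p (f s)) *
        ∑ i, ∑ j, (((1 - Jmat N) * (List.ofFn fun s => K (f s)).prod) i j) ^ 2) :
    specRad R < 1 ∧
      ∀ η : ℝ, specRad R < η → η < 1 →
        ∃ C : ℝ, 0 < C ∧ ∀ t : ℕ, 1 ≤ t → EΨ₂ t ≤ C * η ^ t :=
  stmt11_general hN K hK hdiag p hp hpsum hprim R hR EΨ₂ hEΨ₂
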